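/- arXiv:1812.10182 — 6 statements merged into one kernel-verified Lean document; each statement's English description precedes it below -/
import Mathlib

section
/- Yau's inequality: let (μ_t)_{t≥0} be a differentiable-in-t family of probability measures on X_N solving the Kolmogorov forward equation for L_N, i.e. (d/dt) Σ_η f(η) μ_t(η) = Σ_η (L_N f)(η) μ_t(η) for every function f on X_N, let m be a probability measure on X_N with full support, and let (ν_t)_{t≥0} be a family of full-support probability measures on X_N, differentiable in t, with ψ_t(η) := ν_t(η)/m(η). Assume μ_t has a density f_t := dμ_t/dν_t with respect to ν_t. Then for every t, (d/dt) H(μ_t|ν_t) ≤ − D_N(√(f_t); ν_t) + Σ_η ( (L_N^{*,ν_t} 1)(η) − ∂_t log ψ_t(η) ) μ_t(η), where 1 is the constant function 1 and L_N^{*,ν_t} is the adjoint of L_N in L²(ν_t). -/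
open Finset

/-- The discrete torus `T_N^d = (ℤ/Nℤ)^d`. -/
abbrev Torus (d N : ℕ) := Fin d → ZMod N

/-- The configuration space `X_N = {0,1}^{T_N^d}`. -/
abbrev Config (d N : ℕ) := Torus d N → Bool

/-- The `i`-th unit vector `e_i` of the discrete torus. -/
def uvec (d N : ℕ) (i : Fin d) : Torus d N := fun j => if j = i then 1 else 0

/-- `swapC x y η = η^{x,y}`, the configuration with the values at `x` and `y` exchanged. -/
def swapC {d N : ℕ} (x y : Torus d N) (η : Config d N) : Config d N :=
  fun z => η (Equiv.swap x y z)

/-- `flipC x η = η^x`, the configuration with the value at `x` flipped. -/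
def flipC {d N : ℕ} (x : Torus d N) (η : Config d N) : Config d N :=
  Function.update η x (!(η x))

/-- The Kawasaki generator `L_K f (η) = (1/2) Σ_{x,y:|x-y|=1} (f(η^{x,y}) - f(η))`,
the sum over ordered nearest-neighbour pairs being realized as the sum over `x` and
over the two directions `± e_i`. -/
noncomputable def kawasaki {d N : ℕ} [NeZero N] (f : Config d N → ℝ) (η : Config d N) : ℝ :=
  (1/2) * ∑ x : Torus d N, ∑ i : Fin d,
    ((f (swapC x (x + uvec d N i) η) - f η) + (f (swapC x (x - uvec d N i) η) - f η))

/-- The Glauber generator `L_G f (η) = Σ_x c_x(η) (f(η^x) - f(η))`. -/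
noncomputable def glauber {d N : ℕ} [NeZero N] (c : Torus d N → Config d N → ℝ)
    (f : Config d N → ℝ) (η : Config d N) : ℝ :=
  ∑ x : Torus d N, c x η * (f (flipC x η) - f η)

/-- The full generator `L_N = N² L_K + K L_G`. -/
noncomputable def genLN {d N : ℕ} [NeZero N] (K : ℝ) (c : Torus d N → Config d N → ℝ)
    (f : Config d N → ℝ) (η : Config d N) : ℝ :=
  (N:ℝ)^2 * kawasaki f η + K * glauber c f η

/-- The Kawasaki Dirichlet form `D_K(f;ν) = (1/4) Σ_{x,y:|x-y|=1} ∫ (f(η^{x,y}) - f(η))² dν`. -/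
noncomputable def dirK {d N : ℕ} [NeZero N] (f : Config d N → ℝ) (ν : Config d N → ℝ) : ℝ :=
  (1/4) * ∑ x : Torus d N, ∑ i : Fin d, ∑ η : Config d N,
    (((f (swapC x (x + uvec d N i) η) - f η)^2 + (f (swapC x (x - uvec d N i) η) - f η)^2) * ν η)

/-- The Glauber Dirichlet form `D_G(f;ν) = Σ_x ∫ c_x(η) (f(η^x) - f(η))² dν`. -/
noncomputable def dirG {d N : ℕ} [NeZero N] (c : Torus d N → Config d N → ℝ)
    (f : Config d N → ℝ) (ν : Config d N → ℝ) : ℝ :=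
  ∑ x : Torus d N, ∑ η : Config d N, c x η * (f (flipC x η) - f η)^2 * ν η

/-- The full Dirichlet form `D_N(f;ν) = 2N² D_K(f;ν) + K D_G(f;ν)`. -/
noncomputable def dirN {d N : ℕ} [NeZero N] (K : ℝ) (c : Torus d N → Config d N → ℝ)
    (f : Config d N → ℝ) (ν : Config d N → ℝ) : ℝ :=
  2 * (N:ℝ)^2 * dirK f ν + K * dirG c f ν

/-- The relative entropy `H(μ|ν) = ∫ (dμ/dν) log(dμ/dν) dν`. -/
noncomputable def relEnt {d N : ℕ} [NeZero N] (μ ν : Config d N → ℝ) : ℝ :=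
  ∑ η : Config d N, μ η * Real.log (μ η / ν η)

/-!
Differentiating `H(μ_t|ν_t) = Σ μ_t log (μ_t/ν_t)` and using the forward equation, the part coming
from `∂_t μ_t` becomes `Σ L_N(log f) f ν_t` with `f = μ_t/ν_t`. Along every jump `η → η'` the
elementary inequality `a (log b - log a) ≤ (b - a) - (√b - √a)²` (with `a = f η`, `b = f η'`)
bounds this by `Σ L_N f ν_t - D_N(√f; ν_t)`, and `Σ L_N f ν_t = Σ (L_N^{*,ν_t} 1) μ_t` by duality;
the part coming from `∂_t ν_t` is the `∂_t log ψ_t` term.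

The inequality needs `b = 0 → a = 0`. This holds because a nonnegative solution of the forward
equation has zero derivative where it vanishes, which forces every configuration jumping into a
`μ_t`-null configuration to be `μ_t`-null itself. The same fact gives `μ_s(η) = O((s - t)²)` near a
zero, which is what makes `μ log μ` differentiable there.
-/

open Filter Topology Asymptotics Real

theorem mul_log_sub_log_le_sub_sub_sq {a b : ℝ} (ha : 0 ≤ a) (hb : 0 ≤ b) (hab : b = 0 → a = 0) :
    a * (log b - log a) ≤ b - a - (√b - √a) ^ 2 := by
  rcases ha.eq_or_lt with rfl | ha
  · simp [sq_sqrt hb]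
  have hb : 0 < b := hb.lt_of_ne fun h => ha.ne' (hab h.symm)
  have hlog : log b - log a = 2 * log (√b / √a) := by
    rw [log_div (by positivity) (by positivity), log_sqrt hb.le, log_sqrt ha.le]; ring
  have hle := log_le_sub_one_of_pos (show 0 < √b / √a by positivity)
  calc a * (log b - log a) ≤ a * (2 * (√b / √a - 1)) := by rw [hlog]; gcongr
    _ = b - a - (√b - √a) ^ 2 := by
      have : 0 < √a := by positivity
      field_simp
      linear_combination (√a - 2 * √b) * sq_sqrt ha.le + √a * sq_sqrt hb.le

theorem HasDerivAt.eq_zero_of_nonneg {g : ℝ → ℝ} {g' t : ℝ} (hg : HasDerivAt g g' t)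
    (hg0 : ∀ s, 0 ≤ g s) (ht : g t = 0) : g' = 0 :=
  IsLocalMin.hasDerivAt_eq_zero (.of_forall fun s => ht ▸ hg0 s) hg

theorem isBigO_sub_sq_of_hasDerivAt {g g' : ℝ → ℝ} {t : ℝ} (hg : ∀ s, HasDerivAt g (g' s) s)
    (hg' : g' =O[𝓝 t] (· - t)) : (fun s => g s - g t) =O[𝓝 t] fun s => (s - t) ^ 2 := by
  obtain ⟨C, hC, hCg'⟩ := hg'.exists_nonneg
  obtain ⟨δ, hδ, hball⟩ := Metric.eventually_nhds_iff_ball.mp hCg'.bound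
  refine IsBigO.of_bound C ?_
  filter_upwards [Metric.ball_mem_nhds t hδ] with s hs
  have hbound : ∀ z ∈ Metric.closedBall t (dist s t), ‖g' z‖ ≤ C * dist s t := fun z hz =>
    (hball z (Metric.mem_ball.2 (lt_of_le_of_lt hz (Metric.mem_ball.1 hs)))).trans
      (by rw [← dist_eq_norm]; gcongr; exact hz)
  have := (convex_closedBall t (dist s t)).norm_image_sub_le_of_norm_hasDerivWithin_le
    (fun z _ => (hg z).hasDerivWithinAt) hbound (Metric.mem_closedBall_self dist_nonneg)
    (Metric.mem_closedBall.2 le_rfl)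
  simpa [dist_eq_norm, sq, mul_assoc] using this

theorem hasDerivAt_mul_log_of_isBigO_sq {g : ℝ → ℝ} {t : ℝ} (hg0 : ∀ s, 0 ≤ g s)
    (hg : g =O[𝓝 t] fun s => (s - t) ^ 2) : HasDerivAt (fun s => g s * log (g s)) 0 t := by
  have ht : g t = 0 := by simpa using hg.eq_zero_imp.self_of_nhds
  -- `g log g = 2 √g (√g log √g)`, a product of `O(s - t)` and `o(1)`
  have hsqrt : (fun s => √(g s)) =O[𝓝 t] (· - t) := by
    obtain ⟨C, hC, hCg⟩ := hg.exists_nonneg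
    refine IsBigO.of_bound √C ?_
    filter_upwards [hCg.bound] with s hs
    rw [norm_of_nonneg (sqrt_nonneg _), norm_eq_abs, ← sqrt_sq_eq_abs, ← sqrt_mul hC]
    exact sqrt_le_sqrt (by simpa [abs_of_nonneg (hg0 s)] using hs)
  have hlim : Tendsto (fun s => √(g s) * log √(g s)) (𝓝 t) (𝓝 0) := by
    have := hsqrt.trans_tendsto (tendsto_sub_nhds_zero_iff.2 tendsto_id)
    simpa [Function.comp_def] using (continuous_mul_log.tendsto 0).comp this
  rw [hasDerivAt_iff_isLittleO]
  refine ((hsqrt.mul_isLittleO ((isLittleO_one_iff ℝ).2 hlim)).const_mul_left 2).congr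
    (fun s => ?_) (fun s => by simp)
  rw [log_sqrt (hg0 s), ht]
  have := mul_self_sqrt (hg0 s)
  simp only [zero_mul, log_zero, sub_zero, smul_zero]
  linear_combination (log (g s)) * this

theorem hasDerivAt_mul_log_of_nonneg {g g' : ℝ → ℝ} {t : ℝ} (hg0 : ∀ s, 0 ≤ g s)
    (hg : ∀ s, HasDerivAt g (g' s) s) (hg' : DifferentiableAt ℝ g' t) :
    HasDerivAt (fun s => g s * log (g s)) (g' t * (log (g t) + 1)) t := by
  by_cases ht : g t = 0
  · have hg't : g' t = 0 := (hg t).eq_zero_of_nonneg hg0 ht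
    rw [hg't, zero_mul]
    refine hasDerivAt_mul_log_of_isBigO_sq hg0 ?_
    have := isBigO_sub_sq_of_hasDerivAt hg (by simpa [hg't] using hg'.hasDerivAt.isBigO_sub)
    simpa [ht] using this
  · simpa [Function.comp_def, mul_comm] using (hasDerivAt_mul_log ht).comp t (hg t)

theorem hasDerivAt_mul_log_div {g g' h : ℝ → ℝ} {h' t : ℝ} (hg0 : ∀ s, 0 ≤ g s)
    (hg : ∀ s, HasDerivAt g (g' s) s) (hg' : DifferentiableAt ℝ g' t) (hh0 : ∀ s, 0 < h s)
    (hh : HasDerivAt h h' t) :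
    HasDerivAt (fun s => g s * log (g s / h s))
      (g' t * log (g t / h t) + g' t - g t / h t * h') t := by
  have hsplit : (fun s => g s * log (g s / h s)) = fun s => g s * log (g s) - g s * log (h s) := by
    funext s
    rcases (hg0 s).eq_or_lt with hs | hs
    · simp [← hs]
    · rw [log_div hs.ne' (hh0 s).ne']; ring
  rw [hsplit]
  refine ((hasDerivAt_mul_log_of_nonneg hg0 hg hg').sub
    ((hg t).mul (hh.log (hh0 t).ne'))).congr_deriv ?_
  rcases (hg0 t).eq_or_lt with ht | ht
  · simp [← ht, (hg t).eq_zero_of_nonneg hg0 ht.symm]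
  · rw [log_div ht.ne' (hh0 t).ne']; field_simp; ring

section JumpGenerator

variable {α J : Type*} [Fintype J]

def jumpGen (w : J → α → ℝ) (T : J → α → α) (f : α → ℝ) (η : α) : ℝ :=
  ∑ j, w j η * (f (T j η) - f η)

def jumpDirichlet [Fintype α] (w : J → α → ℝ) (T : J → α → α) (g ν : α → ℝ) : ℝ :=
  ∑ j, ∑ η, w j η * (g (T j η) - g η) ^ 2 * ν η

variable {w : J → α → ℝ} {T : J → α → α}

theorem jumpGen_const (r : ℝ) : jumpGen w T (fun _ => r) = 0 := by
  ext; simp [jumpGen]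

theorem jumpGen_single_of_ne [DecidableEq α] {η₀ η : α} (hη : η ≠ η₀) :
    jumpGen w T (Pi.single η₀ 1) η = ∑ j, w j η * (Pi.single η₀ 1 : α → ℝ) (T j η) := by
  simp [jumpGen, Pi.single_apply, hη]

theorem jumpGen_single_nonneg [DecidableEq α] (hw : ∀ j η, 0 ≤ w j η) {η₀ η : α}
    (hη : η ≠ η₀) : 0 ≤ jumpGen w T (Pi.single η₀ 1) η := by
  rw [jumpGen_single_of_ne hη]
  exact sum_nonneg fun j _ => mul_nonneg (hw j η) (by rw [Pi.single_apply]; positivity)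

theorem le_jumpGen_single [DecidableEq α] (hw : ∀ j η, 0 ≤ w j η) {η : α} {j : J}
    (hj : T j η ≠ η) : w j η ≤ jumpGen w T (Pi.single (T j η) 1) η := by
  rw [jumpGen_single_of_ne hj.symm]
  simpa using single_le_sum (f := fun j' => w j' η * (Pi.single (T j η) 1 : α → ℝ) (T j' η))
    (fun j' _ => mul_nonneg (hw j' η) (by rw [Pi.single_apply]; positivity)) (mem_univ j)

theorem sum_jumpGen_log_mul_le [Fintype α] (hw : ∀ j η, 0 ≤ w j η) {f ν : α → ℝ}
    (hf : ∀ η, 0 ≤ f η) (hν : ∀ η, 0 ≤ ν η)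
    (hsupp : ∀ j η, 0 < w j η → f (T j η) = 0 → f η = 0) :
    ∑ η, jumpGen w T (fun η => log (f η)) η * (f η * ν η)
      ≤ -jumpDirichlet w T (fun η => √(f η)) ν + ∑ η, jumpGen w T f η * ν η := by
  have hterm : ∀ j η, w j η * (log (f (T j η)) - log (f η)) * (f η * ν η)
      ≤ -(w j η * (√(f (T j η)) - √(f η)) ^ 2 * ν η) + w j η * (f (T j η) - f η) * ν η := by
    intro j η
    rcases (hw j η).eq_or_lt with h | h
    · simp [← h]
    · have := mul_le_mul_of_nonneg_left
        (mul_log_sub_log_le_sub_sub_sq (hf η) (hf (T j η)) (hsupp j η h)) (mul_nonneg h.le (hν η))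
      linarith
  rw [jumpDirichlet, sum_comm, ← sum_neg_distrib, ← sum_add_distrib]
  simp only [jumpGen, sum_mul, ← sum_neg_distrib, ← sum_add_distrib]
  gcongr with η _ j _
  exact hterm j η

end JumpGenerator

section ForwardEquation

variable {α : Type*} [Fintype α]

def IsForwardSolution (L : (α → ℝ) → α → ℝ) (μ : ℝ → α → ℝ) : Prop :=
  ∀ f s, HasDerivAt (fun s => ∑ η, f η * μ s η) (∑ η, L f η * μ s η) s

namespace IsForwardSolution

variable {L : (α → ℝ) → α → ℝ} {μ : ℝ → α → ℝ}

theorem hasDerivAt_apply [DecidableEq α] (h : IsForwardSolution L μ) (η : α) (s : ℝ) :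
    HasDerivAt (fun s => μ s η) (∑ η', L (Pi.single η 1) η' * μ s η') s := by
  simpa [Pi.single_apply] using h (Pi.single η 1) s

theorem differentiable_apply (h : IsForwardSolution L μ) (η : α) :
    Differentiable ℝ (fun s => μ s η) := by
  classical exact fun s => (h.hasDerivAt_apply η s).differentiableAt

theorem differentiable_deriv_apply (h : IsForwardSolution L μ) (η : α) :
    Differentiable ℝ (deriv fun s => μ s η) := by
  classical
  rw [funext fun s => (h.hasDerivAt_apply η s).deriv]
  exact Differentiable.fun_sum fun η' _ => (h.differentiable_apply η').const_mul _

theorem sum_mul_deriv (h : IsForwardSolution L μ) (G : α → ℝ) (t : ℝ) :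
    ∑ η, G η * deriv (fun s => μ s η) t = ∑ η, L G η * μ t η :=
  (HasDerivAt.fun_sum fun η _ =>
    (h.differentiable_apply η t).hasDerivAt.const_mul (G η)).unique (h G t)

theorem apply_eq_zero_of_single_pos [DecidableEq α] (h : IsForwardSolution L μ)
    (hμ : ∀ s η, 0 ≤ μ s η) {η₀ η : α} {t : ℝ}
    (hL : ∀ η', η' ≠ η₀ → 0 ≤ L (Pi.single η₀ 1) η') (h₀ : μ t η₀ = 0)
    (hη : η ≠ η₀) (hpos : 0 < L (Pi.single η₀ 1) η) : μ t η = 0 := by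
  have hsum := (h.hasDerivAt_apply η₀ t).eq_zero_of_nonneg (fun s => hμ s η₀) h₀
  have hnonneg : ∀ η' ∈ univ, 0 ≤ L (Pi.single η₀ 1) η' * μ t η' := by
    intro η' _
    rcases eq_or_ne η' η₀ with rfl | hη'
    · simp [h₀]
    · exact mul_nonneg (hL η' hη') (hμ t η')
  exact ((mul_eq_zero.1 ((sum_eq_zero_iff_of_nonneg hnonneg).1 hsum η (mem_univ η))).resolve_left
    hpos.ne')

theorem hasDerivAt_sum_mul_log_div (h : IsForwardSolution L μ) {ν : ℝ → α → ℝ}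
    (hμ : ∀ s η, 0 ≤ μ s η) (hν : ∀ s η, 0 < ν s η)
    (hνdiff : ∀ η, Differentiable ℝ (fun s => ν s η)) (t : ℝ) :
    HasDerivAt (fun s => ∑ η, μ s η * log (μ s η / ν s η))
      (∑ η, (deriv (fun s => μ s η) t * log (μ t η / ν t η) + deriv (fun s => μ s η) t
        - μ t η / ν t η * deriv (fun s => ν s η) t)) t :=
  HasDerivAt.fun_sum fun η _ => hasDerivAt_mul_log_div (fun s => hμ s η)
    (fun s => (h.differentiable_apply η s).hasDerivAt) (h.differentiable_deriv_apply η t)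
    (fun s => hν s η) (hνdiff η t).hasDerivAt

variable {J : Type*} [Fintype J] {w : J → α → ℝ} {T : J → α → α}

theorem apply_eq_zero_of_jump (h : IsForwardSolution (jumpGen w T) μ) (hw : ∀ j η, 0 ≤ w j η)
    (hμ : ∀ s η, 0 ≤ μ s η) {j : J} {η : α} {t : ℝ} (hj : 0 < w j η) (h₀ : μ t (T j η) = 0) :
    μ t η = 0 := by
  classical
  by_cases hT : T j η = η
  · rwa [hT] at h₀
  · exact h.apply_eq_zero_of_single_pos hμ (fun η' => jumpGen_single_nonneg hw) h₀ (Ne.symm hT)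
      (hj.trans_le (le_jumpGen_single hw hT))

theorem deriv_sum_mul_log_div_le (h : IsForwardSolution (jumpGen w T) μ) (hw : ∀ j η, 0 ≤ w j η)
    {ν : ℝ → α → ℝ} {m : α → ℝ} (hμ : ∀ s η, 0 ≤ μ s η) (hν : ∀ s η, 0 < ν s η)
    (hνdiff : ∀ η, Differentiable ℝ (fun s => ν s η)) (hm : ∀ η, m η ≠ 0) {t : ℝ}
    {Lstar1 : α → ℝ}
    (hLstar : ∀ f, ∑ η, jumpGen w T f η * ν t η = ∑ η, Lstar1 η * f η * ν t η) :
    deriv (fun s => ∑ η, μ s η * log (μ s η / ν s η)) t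
      ≤ -jumpDirichlet w T (fun η => √(μ t η / ν t η)) (ν t)
        + ∑ η, (Lstar1 η - deriv (fun s => log (ν s η / m η)) t) * μ t η := by
  have hfν : ∀ η, μ t η / ν t η * ν t η = μ t η := fun η => div_mul_cancel₀ _ (hν t η).ne'
  have hψ : ∀ η, deriv (fun s => log (ν s η / m η)) t = deriv (fun s => ν s η) t / ν t η := by
    intro η
    rw [((((hνdiff η) t).hasDerivAt.div_const (m η)).log
      (div_ne_zero (hν t η).ne' (hm η))).deriv]
    field_simp [hm η]
  have hlog : ∑ η, deriv (fun s => μ s η) t * log (μ t η / ν t η)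
      = ∑ η, jumpGen w T (fun η => log (μ t η / ν t η)) η * (μ t η / ν t η * ν t η) := by
    simp only [mul_comm (deriv _ t), h.sum_mul_deriv (fun η => log (μ t η / ν t η)), hfν]
  have hconst : ∑ η, deriv (fun s => μ s η) t = 0 := by
    simpa [jumpGen_const] using h.sum_mul_deriv (fun _ => 1) t
  have hadj : ∑ η, jumpGen w T (fun η => μ t η / ν t η) η * ν t η = ∑ η, Lstar1 η * μ t η := by
    simp only [hLstar, mul_assoc, hfν]
  have hν' : ∑ η, μ t η / ν t η * deriv (fun s => ν s η) t
      = ∑ η, deriv (fun s => ν s η) t / ν t η * μ t η :=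
    sum_congr rfl fun η _ => by ring
  have key := sum_jumpGen_log_mul_le hw (fun η => div_nonneg (hμ t η) (hν t η).le)
    (fun η => (hν t η).le) fun j η hj h₀ => by
      simp only [div_eq_zero_iff, (hν t _).ne', or_false] at h₀ ⊢
      exact h.apply_eq_zero_of_jump hw hμ hj h₀
  rw [(h.hasDerivAt_sum_mul_log_div hμ hν hνdiff t).deriv]
  simp only [hψ, sum_add_distrib, sum_sub_distrib, sub_mul]
  linarith

end IsForwardSolution

end ForwardEquation

section InteractingParticles

variable {d N : ℕ}

def genLNMove : (Torus d N × Fin d × Bool) ⊕ Torus d N → Config d N → Config d N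
  | .inl (x, i, true) => swapC x (x + uvec d N i)
  | .inl (x, i, false) => swapC x (x - uvec d N i)
  | .inr x => flipC x

noncomputable def genLNRate (K : ℝ) (c : Torus d N → Config d N → ℝ) :
    (Torus d N × Fin d × Bool) ⊕ Torus d N → Config d N → ℝ
  | .inl _, _ => (N : ℝ) ^ 2 / 2
  | .inr x, η => K * c x η

theorem genLNRate_nonneg {K : ℝ} {c : Torus d N → Config d N → ℝ} (hK : 0 ≤ K)
    (hc : ∀ x η, 0 ≤ c x η) : ∀ j η, 0 ≤ genLNRate K c j η
  | .inl _, _ => by simp only [genLNRate]; positivity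
  | .inr x, η => mul_nonneg hK (hc x η)

variable [NeZero N]

theorem genLN_eq_jumpGen (K : ℝ) (c : Torus d N → Config d N → ℝ) :
    genLN K c = jumpGen (genLNRate K c) genLNMove := by
  ext f η
  simp only [genLN, kawasaki, glauber, jumpGen, Fintype.sum_sum_type, Fintype.sum_prod_type,
    Fintype.sum_bool, genLNRate, genLNMove, mul_sum, ← sum_add_distrib]
  refine sum_congr rfl fun x _ => ?_
  congr 1
  · exact sum_congr rfl fun i _ => by ring
  · ring

theorem dirN_eq_jumpDirichlet (K : ℝ) (c : Torus d N → Config d N → ℝ) (g ν : Config d N → ℝ) :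
    dirN K c g ν = jumpDirichlet (genLNRate K c) genLNMove g ν := by
  simp only [dirN, dirK, dirG, jumpDirichlet, Fintype.sum_sum_type, Fintype.sum_prod_type,
    Fintype.sum_bool, genLNRate, genLNMove, mul_sum, ← sum_add_distrib]
  refine sum_congr rfl fun x _ => ?_
  congr 1
  · exact sum_congr rfl fun i _ => sum_congr rfl fun η _ => by ring
  · exact sum_congr rfl fun η _ => by ring

end InteractingParticles

theorem yau_inequality_general (d N : ℕ) [NeZero N] (K : ℝ) (hK : 0 < K)
    (c : Torus d N → Config d N → ℝ) (hc : ∀ x η, 0 ≤ c x η)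
    (μ ν : ℝ → Config d N → ℝ) (m : Config d N → ℝ)
    (hμnonneg : ∀ t η, 0 ≤ μ t η)
    (hνpos : ∀ t η, 0 < ν t η)
    (hmpos : ∀ η, 0 < m η)
    (hforward : ∀ (f : Config d N → ℝ) (t : ℝ),
      HasDerivAt (fun s => ∑ η : Config d N, f η * μ s η)
        (∑ η : Config d N, genLN K c f η * μ t η) t)
    (hνdiff : ∀ η, Differentiable ℝ (fun s => ν s η))
    (Lstar1 : ℝ → Config d N → ℝ)
    (hLstar : ∀ (t : ℝ) (f : Config d N → ℝ),
      ∑ η : Config d N, genLN K c f η * ν t η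
        = ∑ η : Config d N, Lstar1 t η * f η * ν t η)
    (t : ℝ) :
    deriv (fun s => relEnt (μ s) (ν s)) t
      ≤ - dirN K c (fun η => Real.sqrt (μ t η / ν t η)) (ν t)
        + ∑ η : Config d N,
            (Lstar1 t η - deriv (fun s => Real.log (ν s η / m η)) t) * μ t η := by
  rw [dirN_eq_jumpDirichlet]
  rw [genLN_eq_jumpGen] at hforward hLstar
  exact IsForwardSolution.deriv_sum_mul_log_div_le hforward (genLNRate_nonneg hK.le hc) hμnonneg
    hνpos hνdiff (fun η => (hmpos η).ne') (hLstar t)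

/-- Proposition 2.3 (Yau's inequality): if `(μ_t)` solves the Kolmogorov forward equation for
`L_N = N² L_K + K L_G`, `m` is a full-support reference probability measure, `(ν_t)` is a
differentiable family of full-support probability measures with `ψ_t = ν_t/m`, and
`f_t = dμ_t/dν_t`, then
`(d/dt) H(μ_t|ν_t) ≤ - D_N(√f_t; ν_t) + ∫ (L_N^{*,ν_t} 1 - ∂_t log ψ_t) dμ_t`,
where `L_N^{*,ν_t} 1` is characterized by the adjoint relation in `L²(ν_t)`. -/
theorem yau_inequality (d N : ℕ) [NeZero N] (hd : 1 ≤ d) (K : ℝ) (hK : 0 < K)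
    (c : Torus d N → Config d N → ℝ) (hc : ∀ x η, 0 ≤ c x η)
    (μ ν : ℝ → Config d N → ℝ) (m : Config d N → ℝ)
    (hμnonneg : ∀ t η, 0 ≤ μ t η) (hμone : ∀ t, ∑ η : Config d N, μ t η = 1)
    (hνpos : ∀ t η, 0 < ν t η) (hνone : ∀ t, ∑ η : Config d N, ν t η = 1)
    (hmpos : ∀ η, 0 < m η) (hmone : ∑ η : Config d N, m η = 1)
    (hforward : ∀ (f : Config d N → ℝ) (t : ℝ),
      HasDerivAt (fun s => ∑ η : Config d N, f η * μ s η)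
        (∑ η : Config d N, genLN K c f η * μ t η) t)
    (hνdiff : ∀ η, Differentiable ℝ (fun s => ν s η))
    (Lstar1 : ℝ → Config d N → ℝ)
    (hLstar : ∀ (t : ℝ) (f : Config d N → ℝ),
      ∑ η : Config d N, genLN K c f η * ν t η
        = ∑ η : Config d N, Lstar1 t η * f η * ν t η)
    (t : ℝ) :
    deriv (fun s => relEnt (μ s) (ν s)) t
      ≤ - dirN K c (fun η => Real.sqrt (μ t η / ν t η)) (ν t)
        + ∑ η : Config d N,
            (Lstar1 t η - deriv (fun s => Real.log (ν s η / m η)) t) * μ t η :=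
  yau_inequality_general d N K hK c hc μ ν m hμnonneg hνpos hmpos hforward hνdiff Lstar1 hLstar t
end

section
/- Let ν = ν_{u(·)} be the product Bernoulli measure on X_N with means u = (u_x)_{x∈T_N^d} ∈ (0,1)^{T_N^d}. Then the adjoint of the Kawasaki generator applied to the constant function 1 satisfies, pointwise in η ∈ X_N, (L_K^{*,ν} 1)(η) = −(1/2) Σ_{x,y∈T_N^d:|x−y|=1} (u_y − u_x)² ω_x ω_y + Σ_{x∈T_N^d} (Δu)_x ω_x, where (Δu)_x = Σ_{y:|y−x|=1} (u_y − u_x). Equivalently, for every function f on X_N, Σ_η (L_K f)(η) ν(η) = Σ_η [ −(1/2) Σ_{|x−y|=1} (u_y − u_x)² ω_x(η) ω_y(η) + Σ_x (Δu)_x ω_x(η) ] f(η) ν(η). -/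
open Finset

/-- The value in `{0,1} ⊂ ℝ` of an occupation variable. -/
noncomputable def bval : Bool → ℝ := fun b => if b then 1 else 0

/-- The product Bernoulli measure with means `u`. -/
noncomputable def bern {d N : ℕ} [NeZero N] (u : Torus d N → ℝ) (η : Config d N) : ℝ :=
  ∏ x : Torus d N, (if η x then u x else 1 - u x)

/-- The normalized centered occupation variable `ω_x = (η_x - u_x)/χ(u_x)`. -/
noncomputable def omg {d N : ℕ} (u : Torus d N → ℝ) (x : Torus d N) (η : Config d N) : ℝ :=
  (bval (η x) - u x) / (u x * (1 - u x))

/-!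
Under the exchange `η ↦ η^{x,y}` (an involution of `X_N`) one has
`Σ_η (f(η^{x,y}) - f(η)) ν(η) = Σ_η (ν(η^{x,y})/ν(η) - 1) f(η) ν(η)`, and since `ν` is a product
measure the ratio only involves the sites `x`, `y`:
`ν(η^{x,y})/ν(η) = 1 + (u_y - u_x)(ω_x - ω_y) - (u_y - u_x)² ω_x ω_y`.
Summed over nearest-neighbour pairs, the quadratic part gives the first term of `L_K^{*,ν} 1`,
and a summation by parts on the torus turns the linear part into `Σ_x (Δu)_x ω_x`.
-/

section SummationByParts

variable {G R : Type*} [AddCommGroup G] [Fintype G] [CommRing R]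

theorem sum_diff_mul_diff_eq_neg_laplacian (a w : G → R) (v : G) :
    ∑ x, (a (x + v) - a x) * (w (x + v) - w x)
      = -∑ x, (a (x + v) + a (x - v) - 2 * a x) * w x := by
  have hdiag : ∑ x, a (x + v) * w (x + v) = ∑ x, a x * w x :=
    Equiv.sum_comp (Equiv.addRight v) (fun x => a x * w x)
  have hshift : ∑ x, a x * w (x + v) = ∑ x, a (x - v) * w x := by
    simpa using (Equiv.sum_comp (Equiv.subRight v) (fun x => a x * w (x + v))).symm
  calc ∑ x, (a (x + v) - a x) * (w (x + v) - w x)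
      = ∑ x, a (x + v) * w (x + v) - ∑ x, a (x + v) * w x - ∑ x, a x * w (x + v)
          + ∑ x, a x * w x := by
        simp only [← sum_sub_distrib, ← sum_add_distrib]
        exact sum_congr rfl fun x _ => by ring
    _ = -(∑ x, a (x + v) * w x + ∑ x, a (x - v) * w x - 2 * ∑ x, a x * w x) := by
        rw [hdiag, hshift]; ring
    _ = -∑ x, (a (x + v) + a (x - v) - 2 * a x) * w x := by
        simp only [mul_sum, ← sum_sub_distrib, ← sum_add_distrib]
        exact congrArg _ (sum_congr rfl fun x _ => by ring)

theorem sum_diff_mul_diff_pm_eq_neg_laplacian (a w : G → R) (v : G) :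
    ∑ x, ((a (x + v) - a x) * (w (x + v) - w x) + (a (x - v) - a x) * (w (x - v) - w x))
      = -(2 * ∑ x, (a (x + v) + a (x - v) - 2 * a x) * w x) := by
  have hneg := sum_diff_mul_diff_eq_neg_laplacian a w (-v)
  simp only [← sub_eq_add_neg, sub_neg_eq_add] at hneg
  rw [sum_add_distrib, sum_diff_mul_diff_eq_neg_laplacian, hneg]
  simp only [add_comm (a (_ - v))]
  ring

end SummationByParts

section Kawasaki

variable {d N : ℕ}

def siteWeight (u : Torus d N → ℝ) (x : Torus d N) (b : Bool) : ℝ :=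
  if b then u x else 1 - u x

noncomputable def swapRatio (u : Torus d N → ℝ) (x y : Torus d N) (η : Config d N) : ℝ :=
  1 + (u y - u x) * (omg u x η - omg u y η) - (u y - u x) ^ 2 * omg u x η * omg u y η

theorem swapC_swapC (x y : Torus d N) (η : Config d N) : swapC x y (swapC x y η) = η := by
  funext z; simp [swapC]

theorem siteWeight_exchange (u : Torus d N → ℝ) {x y : Torus d N}
    (hx : u x ∈ Set.Ioo (0 : ℝ) 1) (hy : u y ∈ Set.Ioo (0 : ℝ) 1) (η : Config d N) :
    siteWeight u x (η y) * siteWeight u y (η x)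
      = siteWeight u x (η x) * siteWeight u y (η y) * swapRatio u x y η := by
  have hx₀ : u x ≠ 0 := hx.1.ne'
  have hx₁ : 1 - u x ≠ 0 := sub_ne_zero.mpr hx.2.ne'
  have hy₀ : u y ≠ 0 := hy.1.ne'
  have hy₁ : 1 - u y ≠ 0 := sub_ne_zero.mpr hy.2.ne'
  unfold siteWeight swapRatio omg bval
  cases η x <;> cases η y <;> simp only [Bool.false_eq_true, if_true, if_false] <;>
    field_simp <;> ring

variable [NeZero N]

theorem bern_eq_siteWeight_mul {x y : Torus d N} (hxy : x ≠ y) (u : Torus d N → ℝ)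
    (η : Config d N) :
    bern u η = siteWeight u x (η x) * siteWeight u y (η y)
      * ∏ z ∈ ({x, y} : Finset _)ᶜ, siteWeight u z (η z) := by
  rw [← prod_pair hxy (f := fun z => siteWeight u z (η z)), prod_mul_prod_compl]
  rfl

theorem bern_swapC (u : Torus d N → ℝ) (hu : ∀ x, u x ∈ Set.Ioo (0 : ℝ) 1)
    (x y : Torus d N) (η : Config d N) :
    bern u (swapC x y η) = bern u η * swapRatio u x y η := by
  obtain rfl | hxy := eq_or_ne x y
  · rw [show swapC x x η = η from funext fun z => by simp [swapC]]
    simp [swapRatio]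
  have hfix : ∀ z ∈ ({x, y} : Finset _)ᶜ, swapC x y η z = η z := fun z hz => by
    simp only [mem_compl, mem_insert, mem_singleton, not_or] at hz
    simp [swapC, Equiv.swap_apply_of_ne_of_ne hz.1 hz.2]
  rw [bern_eq_siteWeight_mul hxy, bern_eq_siteWeight_mul hxy, prod_congr rfl
    fun z hz => congrArg _ (hfix z hz)]
  simp only [swapC, Equiv.swap_apply_left, Equiv.swap_apply_right]
  rw [siteWeight_exchange u (hu x) (hu y)]
  ring

theorem sum_exchange_mul_bern (u : Torus d N → ℝ) (hu : ∀ x, u x ∈ Set.Ioo (0 : ℝ) 1)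
    (f : Config d N → ℝ) (x y : Torus d N) :
    ∑ η, (f (swapC x y η) - f η) * bern u η = ∑ η, (swapRatio u x y η - 1) * f η * bern u η := by
  have hinv : ∑ η, f (swapC x y η) * bern u η = ∑ η, f η * bern u (swapC x y η) := by
    simpa only [swapC_swapC] using
      (Function.Involutive.bijective (swapC_swapC x y)).sum_comp
        (fun η => f η * bern u (swapC x y η))
  simp only [sub_mul, sum_sub_distrib, hinv, bern_swapC u hu]
  congr 1 <;> exact sum_congr rfl fun η _ => by ring

theorem sum_swapRatio_sub_one_pm (u : Torus d N → ℝ) (v : Torus d N) (η : Config d N) :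
    ∑ x, ((swapRatio u x (x + v) η - 1) + (swapRatio u x (x - v) η - 1))
      = -∑ x, ((u (x + v) - u x) ^ 2 * omg u x η * omg u (x + v) η
          + (u (x - v) - u x) ^ 2 * omg u x η * omg u (x - v) η)
        + 2 * ∑ x, (u (x + v) + u (x - v) - 2 * u x) * omg u x η := by
  have green := sum_diff_mul_diff_pm_eq_neg_laplacian u (fun x => omg u x η) v
  calc ∑ x, ((swapRatio u x (x + v) η - 1) + (swapRatio u x (x - v) η - 1))
      = -∑ x, ((u (x + v) - u x) * (omg u (x + v) η - omg u x η)
            + (u (x - v) - u x) * (omg u (x - v) η - omg u x η))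
        - ∑ x, ((u (x + v) - u x) ^ 2 * omg u x η * omg u (x + v) η
            + (u (x - v) - u x) ^ 2 * omg u x η * omg u (x - v) η) := by
        rw [← sum_neg_distrib, ← sum_sub_distrib]
        exact sum_congr rfl fun x _ => by unfold swapRatio; ring
    _ = _ := by rw [green]; ring

theorem half_sum_swapRatio_sub_one (u : Torus d N → ℝ) (η : Config d N) :
    1 / 2 * ∑ x, ∑ i : Fin d,
        ((swapRatio u x (x + uvec d N i) η - 1) + (swapRatio u x (x - uvec d N i) η - 1))
      = -(1/2) * (∑ x : Torus d N, ∑ i : Fin d,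
              ((u (x + uvec d N i) - u x)^2 * omg u x η * omg u (x + uvec d N i) η
               + (u (x - uvec d N i) - u x)^2 * omg u x η * omg u (x - uvec d N i) η))
           + ∑ x : Torus d N,
              (∑ i : Fin d, (u (x + uvec d N i) + u (x - uvec d N i) - 2 * u x)) * omg u x η := by
  have hquad := sum_comm (s := (univ : Finset (Torus d N))) (t := (univ : Finset (Fin d)))
    (f := fun x i => (u (x + uvec d N i) - u x)^2 * omg u x η * omg u (x + uvec d N i) η
      + (u (x - uvec d N i) - u x)^2 * omg u x η * omg u (x - uvec d N i) η)
  have hlap := sum_comm (s := (univ : Finset (Torus d N))) (t := (univ : Finset (Fin d)))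
    (f := fun x i => (u (x + uvec d N i) + u (x - uvec d N i) - 2 * u x) * omg u x η)
  simp only [sum_mul] at hlap ⊢
  rw [sum_comm, hquad, hlap]
  simp only [sum_swapRatio_sub_one_pm]
  simp only [sum_add_distrib, sum_neg_distrib, ← mul_sum]
  ring

theorem sum_kawasaki_mul_bern (u : Torus d N → ℝ) (hu : ∀ x, u x ∈ Set.Ioo (0 : ℝ) 1)
    (f : Config d N → ℝ) :
    ∑ η, kawasaki f η * bern u η
      = ∑ η, (1 / 2 * ∑ x, ∑ i : Fin d,
          ((swapRatio u x (x + uvec d N i) η - 1) + (swapRatio u x (x - uvec d N i) η - 1)))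
          * f η * bern u η := by
  calc ∑ η, kawasaki f η * bern u η
      = 1 / 2 * ∑ x, ∑ i : Fin d,
          (∑ η, (f (swapC x (x + uvec d N i) η) - f η) * bern u η
            + ∑ η, (f (swapC x (x - uvec d N i) η) - f η) * bern u η) := by
        simp only [kawasaki, mul_assoc, ← mul_sum, ← sum_add_distrib, add_mul, sum_mul]
        rw [sum_comm]
        refine congrArg _ (sum_congr rfl fun x _ => ?_)
        rw [sum_comm]
    _ = _ := by
        simp only [sum_exchange_mul_bern u hu, ← sum_add_distrib, mul_sum, sum_mul]
        refine (sum_congr rfl fun x _ => sum_comm).trans ?_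
        rw [sum_comm]
        exact sum_congr rfl fun η _ => sum_congr rfl fun x _ => sum_congr rfl fun i _ => by ring

end Kawasaki

theorem kawasaki_adjoint_one_general (d N : ℕ) [NeZero N]
    (u : Torus d N → ℝ) (hu : ∀ x, u x ∈ Set.Ioo (0:ℝ) 1)
    (f : Config d N → ℝ) :
    ∑ η : Config d N, kawasaki f η * bern u η
      = ∑ η : Config d N,
          (-(1/2) * (∑ x : Torus d N, ∑ i : Fin d,
              ((u (x + uvec d N i) - u x)^2 * omg u x η * omg u (x + uvec d N i) η
               + (u (x - uvec d N i) - u x)^2 * omg u x η * omg u (x - uvec d N i) η))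
           + ∑ x : Torus d N,
              (∑ i : Fin d, (u (x + uvec d N i) + u (x - uvec d N i) - 2 * u x)) * omg u x η)
          * f η * bern u η := by
  rw [sum_kawasaki_mul_bern u hu f]
  simp only [half_sum_swapRatio_sub_one]

/-- Lemma 2.4: `L_K^{*,ν} 1 = -(1/2) Σ_{|x-y|=1} (u_y-u_x)² ω_x ω_y + Σ_x (Δu)_x ω_x`,
stated in its (equivalent) weak form: for every function `f` on `X_N`,
`Σ_η (L_K f)(η) ν(η) = Σ_η [RHS](η) f(η) ν(η)`. -/
theorem kawasaki_adjoint_one (d N : ℕ) [NeZero N] (hd : 1 ≤ d)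
    (u : Torus d N → ℝ) (hu : ∀ x, u x ∈ Set.Ioo (0:ℝ) 1)
    (f : Config d N → ℝ) :
    ∑ η : Config d N, kawasaki f η * bern u η
      = ∑ η : Config d N,
          (-(1/2) * (∑ x : Torus d N, ∑ i : Fin d,
              ((u (x + uvec d N i) - u x)^2 * omg u x η * omg u (x + uvec d N i) η
               + (u (x - uvec d N i) - u x)^2 * omg u x η * omg u (x - uvec d N i) η))
           + ∑ x : Torus d N,
              (∑ i : Fin d, (u (x + uvec d N i) + u (x - uvec d N i) - 2 * u x)) * omg u x η)
          * f η * bern u η :=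
  kawasaki_adjoint_one_general d N u hu f
end

section
/- Intermediate step of the flow construction: there exists a constant c > 0 depending only on d such that for every ℓ ∈ ℕ and every k with 1 ≤ k ≤ ℓ−1 there is a flow Ψ_k^ℓ on the nearest-neighbor graph of Λ_{k+1} connecting the uniform distribution p_k on Λ_k and the uniform distribution p_{k+1} on Λ_{k+1} with sup_{x,j} |Ψ_k^ℓ(x, x+e_j)| ≤ c k^{−d}. -/
open Finset

/-- The box `Λ_ℓ = [0, ℓ-1]^d ∩ ℤ^d`. -/
noncomputable def boxZ (d ℓ : ℕ) : Finset (Fin d → ℤ) :=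
  Fintype.piFinset fun _ => Finset.Icc 0 ((ℓ : ℤ) - 1)

/-- The `j`-th unit vector `e_j ∈ ℤ^d`. -/
def eZ (d : ℕ) (j : Fin d) : Fin d → ℤ := fun k => if k = j then 1 else 0

/-- The uniform probability distribution `p_ℓ` on `Λ_ℓ`. -/
noncomputable def punif (d ℓ : ℕ) (x : Fin d → ℤ) : ℝ :=
  if x ∈ boxZ d ℓ then ((ℓ : ℝ) ^ d)⁻¹ else 0

/-- `Φ` is a flow on the nearest-neighbour graph of `Λ_b` connecting `p` and `q`. -/
def IsFlow (d b : ℕ) (Φ : (Fin d → ℤ) → (Fin d → ℤ) → ℝ)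
    (p q : (Fin d → ℤ) → ℝ) : Prop :=
  (∀ x y, Φ x y = - Φ y x) ∧
  (∀ x y, Φ x y ≠ 0 →
    x ∈ boxZ d b ∧ y ∈ boxZ d b ∧ ∃ j : Fin d, y = x + eZ d j ∨ y = x - eZ d j) ∧
  (∀ x ∈ boxZ d b, (∑ j : Fin d, (Φ x (x + eZ d j) + Φ x (x - eZ d j))) = p x - q x)

/-!
The uniform distribution on `Λ_k` is the product of the one-dimensional uniform distributions
`u_k` on `{0, …, k-1}`. Telescoping coordinate by coordinate,
`p_k - p_{k+1} = ∑_j (u_k(x_j) - u_{k+1}(x_j)) ∏_{i<j} u_k(x_i) ∏_{i>j} u_{k+1}(x_i)`,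
and the `j`-th summand is the divergence, in direction `j`, of the edge flow obtained by
replacing `u_k - u_{k+1}` with the one-dimensional flow `φ_k(a) = (a+1)/(k(k+1))` from `u_k`
to `u_{k+1}` (the cumulative mass of `u_k - u_{k+1}` on `{0, …, a}`). All factors of this
edge flow are at most `1/k`, so it is bounded by `k^{-d}`.
-/

theorem prod_sub_prod_eq_sum_ordered {ι R : Type*} [CommRing R] [LinearOrder ι] (s : Finset ι)
    (f g : ι → R) :
    ∏ i ∈ s, f i - ∏ i ∈ s, g i =
      ∑ i ∈ s, (f i - g i) * (∏ j ∈ s with j < i, f j) * ∏ j ∈ s with i < j, g j := by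
  have h := prod_add_ordered s g (fun i => f i - g i)
  simp only [add_sub_cancel] at h
  rw [h, add_sub_cancel_left]

noncomputable def unifInterval (m : ℕ) (a : ℤ) : ℝ :=
  if a ∈ Icc 0 ((m : ℤ) - 1) then (m : ℝ)⁻¹ else 0

noncomputable def intervalFlow (k : ℕ) (a : ℤ) : ℝ :=
  if a ∈ Icc 0 ((k : ℤ) - 1) then ((a : ℝ) + 1) / ((k : ℝ) * (k + 1)) else 0

theorem mem_Icc_of_unifInterval_ne_zero {m : ℕ} {a : ℤ} (h : unifInterval m a ≠ 0) :
    a ∈ Icc 0 ((m : ℤ) - 1) := by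
  by_contra ha
  exact h (if_neg ha)

theorem mem_Icc_of_intervalFlow_ne_zero {k : ℕ} {a : ℤ} (h : intervalFlow k a ≠ 0) :
    a ∈ Icc 0 ((k : ℤ) - 1) := by
  by_contra ha
  exact h (if_neg ha)

theorem abs_unifInterval_le {m k : ℕ} (hk : 1 ≤ k) (hkm : k ≤ m) (a : ℤ) :
    |unifInterval m a| ≤ (k : ℝ)⁻¹ := by
  unfold unifInterval
  split_ifs
  · rw [abs_of_nonneg (by positivity)]
    exact inv_anti₀ (by exact_mod_cast hk) (by exact_mod_cast hkm)
  · simp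

theorem abs_intervalFlow_le (k : ℕ) (a : ℤ) : |intervalFlow k a| ≤ (k : ℝ)⁻¹ := by
  unfold intervalFlow
  split_ifs with ha
  · rw [mem_Icc] at ha
    have ha0 : (0 : ℝ) ≤ a := by exact_mod_cast ha.1
    have hak : (a : ℝ) + 1 ≤ k := by exact_mod_cast (by omega : a + 1 ≤ k)
    have hk : (0 : ℝ) < k := by linarith
    rw [abs_of_nonneg (by positivity), div_le_iff₀ (by positivity)]
    field_simp
    linarith
  · simp

theorem intervalFlow_sub_intervalFlow_sub_one {k : ℕ} (hk : 1 ≤ k) (a : ℤ) :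
    intervalFlow k a - intervalFlow k (a - 1) = unifInterval k a - unifInterval (k + 1) a := by
  have hk0 : (k : ℝ) ≠ 0 := by positivity
  unfold intervalFlow unifInterval
  simp only [mem_Icc]
  push_cast
  split_ifs <;> try (exfalso; omega)
  · field_simp
    ring
  · obtain rfl : a = 0 := by omega
    field_simp
    ring
  · obtain rfl : a = k := by omega
    push_cast
    field_simp
    ring
  · simp

theorem punif_eq_prod (d m : ℕ) (x : Fin d → ℤ) :
    punif d m x = ∏ i, unifInterval m (x i) := by
  simp only [punif, unifInterval, boxZ, Fintype.prod_ite_zero, Fintype.mem_piFinset,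
    prod_const, card_univ, Fintype.card_fin, inv_pow]


section EdgeFlows

variable {d : ℕ}

theorem eZ_injective : Function.Injective (eZ d) := by
  intro i j h
  by_contra hij
  simpa [eZ, hij] using congrFun h i

theorem add_eZ_add_eZ_ne_self (x : Fin d → ℤ) (i j : Fin d) : x + eZ d i + eZ d j ≠ x := by
  intro h
  have := congrFun h i
  simp only [Pi.add_apply, eZ, if_true] at this
  split_ifs at this <;> omega

theorem sub_eZ_apply_of_ne (x : Fin d → ℤ) {i j : Fin d} (h : i ≠ j) : (x - eZ d j) i = x i := by
  simp [eZ, h]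

noncomputable def outflow (F : (Fin d → ℤ) → Fin d → ℝ) (x y : Fin d → ℤ) : ℝ :=
  ∑ j, if y = x + eZ d j then F x j else 0

noncomputable def flowOfEdges (F : (Fin d → ℤ) → Fin d → ℝ) (x y : Fin d → ℤ) : ℝ :=
  outflow F x y - outflow F y x

variable (F : (Fin d → ℤ) → Fin d → ℝ)

theorem outflow_add_eZ (x : Fin d → ℤ) (j : Fin d) : outflow F x (x + eZ d j) = F x j := by
  rw [outflow, sum_eq_single j, if_pos rfl]
  · intro i _ hij
    exact if_neg fun h => hij (eZ_injective (add_left_cancel h)).symm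
  · simp

theorem exists_of_outflow_ne_zero {x y : Fin d → ℤ} (h : outflow F x y ≠ 0) :
    ∃ j, y = x + eZ d j ∧ F x j ≠ 0 := by
  obtain ⟨j, -, hj⟩ := exists_ne_zero_of_sum_ne_zero h
  by_cases hy : y = x + eZ d j
  · exact ⟨j, hy, by rwa [if_pos hy] at hj⟩
  · exact absurd (if_neg hy) hj

theorem outflow_add_eZ_self (x : Fin d → ℤ) (j : Fin d) : outflow F (x + eZ d j) x = 0 := by
  by_contra h
  obtain ⟨i, hx, -⟩ := exists_of_outflow_ne_zero F h
  exact add_eZ_add_eZ_ne_self x j i hx.symm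

theorem outflow_sub_eZ (x : Fin d → ℤ) (j : Fin d) : outflow F x (x - eZ d j) = 0 := by
  by_contra h
  obtain ⟨i, hx, -⟩ := exists_of_outflow_ne_zero F h
  exact add_eZ_add_eZ_ne_self x i j (sub_eq_iff_eq_add.mp hx).symm

theorem flowOfEdges_add_eZ (x : Fin d → ℤ) (j : Fin d) :
    flowOfEdges F x (x + eZ d j) = F x j := by
  rw [flowOfEdges, outflow_add_eZ, outflow_add_eZ_self, sub_zero]

theorem flowOfEdges_sub_eZ (x : Fin d → ℤ) (j : Fin d) :
    flowOfEdges F x (x - eZ d j) = -F (x - eZ d j) j := by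
  rw [flowOfEdges, outflow_sub_eZ, ← outflow_add_eZ F (x - eZ d j) j, sub_add_cancel, zero_sub]

theorem isFlow_flowOfEdges {b : ℕ} {p q : (Fin d → ℤ) → ℝ}
    (hsupp : ∀ x j, F x j ≠ 0 → x ∈ boxZ d b ∧ x + eZ d j ∈ boxZ d b)
    (hdiv : ∀ x ∈ boxZ d b, ∑ j, (F x j - F (x - eZ d j) j) = p x - q x) :
    IsFlow d b (flowOfEdges F) p q := by
  refine ⟨fun x y => (neg_sub _ _).symm, fun x y hxy => ?_, fun x hx => ?_⟩
  · rcases ne_or_eq (outflow F x y) 0 with h | h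
    · obtain ⟨j, rfl, hj⟩ := exists_of_outflow_ne_zero F h
      exact ⟨(hsupp x j hj).1, (hsupp x j hj).2, j, .inl rfl⟩
    · rw [flowOfEdges, h, zero_sub, neg_ne_zero] at hxy
      obtain ⟨j, rfl, hj⟩ := exists_of_outflow_ne_zero F hxy
      exact ⟨(hsupp y j hj).2, (hsupp y j hj).1, j, .inr (add_sub_cancel_right y _).symm⟩
  · simp only [flowOfEdges_add_eZ, flowOfEdges_sub_eZ, ← sub_eq_add_neg]
    exact hdiv x hx

end EdgeFlows

noncomputable def productEdgeFlow (d k : ℕ) (x : Fin d → ℤ) (j : Fin d) : ℝ :=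
  intervalFlow k (x j) * (∏ i with i < j, unifInterval k (x i)) *
    ∏ i with j < i, unifInterval (k + 1) (x i)

section ProductEdgeFlow

variable {d k : ℕ}

theorem productEdgeFlow_ne_zero {x : Fin d → ℤ} {j : Fin d} (h : productEdgeFlow d k x j ≠ 0) :
    x ∈ boxZ d (k + 1) ∧ x + eZ d j ∈ boxZ d (k + 1) := by
  have hj := mem_Icc_of_intervalFlow_ne_zero (left_ne_zero_of_mul (left_ne_zero_of_mul h))
  have hlt := prod_ne_zero_iff.mp (right_ne_zero_of_mul (left_ne_zero_of_mul h))
  have hgt := prod_ne_zero_iff.mp (right_ne_zero_of_mul h)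
  have hx : ∀ i, x i ∈ Icc 0 (k : ℤ) := by
    intro i
    rcases lt_trichotomy i j with hij | rfl | hij
    · have := mem_Icc_of_unifInterval_ne_zero (hlt i (by simp [hij]))
      simp only [mem_Icc] at this ⊢
      omega
    · simp only [mem_Icc] at hj ⊢
      omega
    · have := mem_Icc_of_unifInterval_ne_zero (hgt i (by simp [hij]))
      simpa using this
  simp only [boxZ, Fintype.mem_piFinset, mem_Icc, Pi.add_apply, eZ] at hx hj ⊢
  push_cast
  refine ⟨fun i => by have := hx i; omega, fun i => ?_⟩
  split_ifs with hij
  · subst hij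
    omega
  · simpa using hx i

theorem sum_productEdgeFlow_sub (hk : 1 ≤ k) (x : Fin d → ℤ) :
    ∑ j, (productEdgeFlow d k x j - productEdgeFlow d k (x - eZ d j) j) =
      punif d k x - punif d (k + 1) x := by
  rw [punif_eq_prod, punif_eq_prod, prod_sub_prod_eq_sum_ordered]
  refine sum_congr rfl fun j _ => ?_
  have hlt : ∏ i with i < j, unifInterval k ((x - eZ d j) i) =
      ∏ i with i < j, unifInterval k (x i) :=
    prod_congr rfl fun i hi => by rw [sub_eZ_apply_of_ne x (mem_filter.mp hi).2.ne]
  have hgt : ∏ i with j < i, unifInterval (k + 1) ((x - eZ d j) i) =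
      ∏ i with j < i, unifInterval (k + 1) (x i) :=
    prod_congr rfl fun i hi => by rw [sub_eZ_apply_of_ne x (mem_filter.mp hi).2.ne']
  have hxj : (x - eZ d j) j = x j - 1 := by simp [eZ]
  rw [productEdgeFlow, productEdgeFlow, hlt, hgt, hxj,
    ← intervalFlow_sub_intervalFlow_sub_one hk]
  ring

theorem abs_productEdgeFlow_le (hk : 1 ≤ k) (x : Fin d → ℤ) (j : Fin d) :
    |productEdgeFlow d k x j| ≤ ((k : ℝ) ^ d)⁻¹ := by
  have hprod (m : ℕ) (hkm : k ≤ m) (s : Finset (Fin d)) :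
      |∏ i ∈ s, unifInterval m (x i)| ≤ (k : ℝ)⁻¹ ^ #s := by
    rw [abs_prod]
    exact (prod_le_prod (fun _ _ => abs_nonneg _) fun i _ => abs_unifInterval_le hk hkm _).trans
      (prod_const _).le
  calc |productEdgeFlow d k x j|
      = |intervalFlow k (x j)| * |∏ i with i < j, unifInterval k (x i)| *
          |∏ i with j < i, unifInterval (k + 1) (x i)| := by
        rw [productEdgeFlow, abs_mul, abs_mul]
    _ ≤ (k : ℝ)⁻¹ * (k : ℝ)⁻¹ ^ (j : ℕ) * (k : ℝ)⁻¹ ^ (d - 1 - j) := by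
        gcongr
        · exact abs_intervalFlow_le k _
        · simpa [filter_gt_eq_Iio] using hprod k le_rfl {i | i < j}
        · simpa [filter_lt_eq_Ioi] using hprod (k + 1) k.le_succ {i | j < i}
    _ = ((k : ℝ) ^ d)⁻¹ := by
        rw [← pow_succ', ← pow_add, inv_pow]
        congr 2
        omega

end ProductEdgeFlow

theorem flow_construction_step_general (d : ℕ) :
    ∃ c : ℝ, 0 < c ∧ ∀ ℓ k : ℕ, 1 ≤ k → k ≤ ℓ - 1 →
      ∃ Ψ : (Fin d → ℤ) → (Fin d → ℤ) → ℝ,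
        IsFlow d (k + 1) Ψ (punif d k) (punif d (k + 1)) ∧
        ∀ (x : Fin d → ℤ) (j : Fin d), |Ψ x (x + eZ d j)| ≤ c * ((k : ℝ) ^ d)⁻¹ := by
  refine ⟨1, one_pos, fun _ k hk _ => ⟨flowOfEdges (productEdgeFlow d k), ?_, fun x j => ?_⟩⟩
  · exact isFlow_flowOfEdges _ (fun _ _ => productEdgeFlow_ne_zero)
      (fun x _ => sum_productEdgeFlow_sub hk x)
  · rw [flowOfEdges_add_eZ, one_mul]
    exact abs_productEdgeFlow_le hk x j

/-- Intermediate step of the flow construction (proof of Lemma 3.2): there is `c > 0`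
depending only on `d` such that for every `ℓ` and `1 ≤ k ≤ ℓ - 1` there is a flow `Ψ_k^ℓ`
on `Λ_{k+1}` connecting the uniform distributions `p_k` and `p_{k+1}` with
`sup_{x,j} |Ψ_k^ℓ(x, x+e_j)| ≤ c k^{-d}`. -/
theorem flow_construction_step (d : ℕ) (hd : 1 ≤ d) :
    ∃ c : ℝ, 0 < c ∧ ∀ ℓ k : ℕ, 1 ≤ k → k ≤ ℓ - 1 →
      ∃ Ψ : (Fin d → ℤ) → (Fin d → ℤ) → ℝ,
        IsFlow d (k + 1) Ψ (punif d k) (punif d (k + 1)) ∧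
        ∀ (x : Fin d → ℤ) (j : Fin d), |Ψ x (x + eZ d j)| ≤ c * ((k : ℝ) ^ d)⁻¹ :=
  flow_construction_step_general d
end

section
/- Integration by parts under an inhomogeneous Bernoulli measure: let 0 < u_- < u_+ < 1. There exists C = C_{u_-,u_+} > 0 such that the following holds. Let ν = ν_{u(·)} be the product Bernoulli measure on X_N with means u, let x, y ∈ T_N^d with |x−y| = 1 and u_x, u_y ∈ [u_-, u_+], let h be a function on X_N satisfying h(η^{x,y}) = h(η) for all η, and let f ≥ 0 be a probability density with respect to ν. Then ∫ h (η_y − η_x) f dν = ∫ h(η) η_x ( f(η^{x,y}) − f(η) ) dν + R₁, where the error satisfies |R₁| ≤ C |u_x − u_y| ∫ |h| f dν. -/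
/-!
Changing variables `η ↦ η^{x,y}` in `∫ h η_y f dν` (the swap is an involution and `h` is invariant)
gives `R₁ = ∑_η h(η) η_x f(η^{x,y}) (ν(η^{x,y}) - ν(η))`. Only `η` with `η_x = 1`, `η_y = 0`
contribute, and for those `((1 - u_x) u_y) (ν(η^{x,y}) - ν(η)) = (u_y - u_x) ν(η^{x,y})`.
Since `(1 - u_x) u_y ≥ u_-(1 - u_+)`, undoing the change of variables gives the bound with
`C = 1 / (u_-(1 - u_+))`.
-/

open Finset

section Swap

variable {d N : ℕ} (x y : Torus d N)

@[simp]
lemma swapC_apply_left (η : Config d N) : swapC x y η x = η y := by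
  simp [swapC]

@[simp]
lemma swapC_apply_right (η : Config d N) : swapC x y η y = η x := by
  simp [swapC]

lemma swapC_apply_of_ne {z : Torus d N} (hx : z ≠ x) (hy : z ≠ y) (η : Config d N) :
    swapC x y η z = η z := by
  simp [swapC, Equiv.swap_apply_of_ne_of_ne hx hy]

lemma swapC_involutive : Function.Involutive (swapC x y) := fun η => by
  funext z
  simp [swapC]

lemma swapC_eq_self_of_eq {η : Config d N} (h : η x = η y) : swapC x y η = η := by
  funext z
  rcases eq_or_ne z x with rfl | hx
  · simp [h]
  rcases eq_or_ne z y with rfl | hy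
  · simp [h]
  exact swapC_apply_of_ne x y hx hy η

variable [NeZero N]

lemma sum_comp_swapC {M : Type*} [AddCommMonoid M] (F : Config d N → M) :
    ∑ η, F (swapC x y η) = ∑ η, F η :=
  Equiv.sum_comp (swapC_involutive x y).toPerm F

lemma sum_sub_sum_eq_sum_swapC (h f w : Config d N → ℝ) (hh : ∀ η, h (swapC x y η) = h η) :
    (∑ η, h η * (bval (η y) - bval (η x)) * f η * w η)
        - ∑ η, h η * bval (η x) * (f (swapC x y η) - f η) * w η
      = ∑ η, h η * bval (η x) * f (swapC x y η) * (w (swapC x y η) - w η) := by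
  have hmove : ∑ η, h η * bval (η y) * f η * w η
      = ∑ η, h η * bval (η x) * f (swapC x y η) * w (swapC x y η) := by
    rw [← sum_comp_swapC x y]
    simp only [hh, swapC_apply_right]
  calc _ = (∑ η, h η * bval (η y) * f η * w η)
          - ∑ η, h η * bval (η x) * f (swapC x y η) * w η := by
        rw [← sum_sub_distrib, ← sum_sub_distrib]
        exact sum_congr rfl fun η _ => by ring
    _ = _ := by
        rw [hmove, ← sum_sub_distrib]
        exact sum_congr rfl fun η _ => by ring

end Swap

section Bernoulli

variable {d N : ℕ} [NeZero N] {u : Torus d N → ℝ}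

lemma bval_nonneg (b : Bool) : 0 ≤ bval b := by
  cases b <;> simp [bval]

lemma bern_nonneg (hu : ∀ z, u z ∈ Set.Icc (0:ℝ) 1) (η : Config d N) : 0 ≤ bern u η :=
  prod_nonneg fun z _ => by
    obtain ⟨h0, h1⟩ := hu z
    split <;> linarith

lemma bern_eq_mul_mul_prod {x y : Torus d N} (hxy : x ≠ y) (η : Config d N) :
    bern u η = (if η x then u x else 1 - u x) * (if η y then u y else 1 - u y)
      * ∏ z ∈ (univ.erase x).erase y, (if η z then u z else 1 - u z) := by
  rw [bern, ← mul_prod_erase univ _ (mem_univ x),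
    ← mul_prod_erase _ _ (mem_erase.2 ⟨hxy.symm, mem_univ y⟩), mul_assoc]

lemma bern_swapC_sub_mul {x y : Torus d N} {η : Config d N} (hx : η x = true) (hy : η y = false) :
    (bern u (swapC x y η) - bern u η) * ((1 - u x) * u y)
      = (u y - u x) * bern u (swapC x y η) := by
  have hxy : x ≠ y := fun h => by simp_all
  have hrest : ∏ z ∈ (univ.erase x).erase y, (if swapC x y η z then u z else 1 - u z)
      = ∏ z ∈ (univ.erase x).erase y, (if η z then u z else 1 - u z) :=
    prod_congr rfl fun z hz => by
      obtain ⟨hzy, hzx, -⟩ := mem_erase.1 hz |>.imp_right mem_erase.1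
      rw [swapC_apply_of_ne x y hzx hzy]
  rw [bern_eq_mul_mul_prod hxy, bern_eq_mul_mul_prod hxy η, hrest]
  simp only [swapC_apply_left, swapC_apply_right, hx, hy, Bool.false_eq_true, if_true, if_false]
  ring

lemma bval_mul_abs_bern_swapC_sub_le (hu : ∀ z, u z ∈ Set.Icc (0:ℝ) 1) {x y : Torus d N}
    {c : ℝ} (hc : 0 < c) (hcu : c ≤ (1 - u x) * u y) (η : Config d N) :
    bval (η x) * |bern u (swapC x y η) - bern u η|
      ≤ c⁻¹ * |u x - u y| * bern u (swapC x y η) := by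
  have hrhs : 0 ≤ c⁻¹ * |u x - u y| * bern u (swapC x y η) := by
    have := bern_nonneg hu (swapC x y η)
    positivity
  cases hx : η x
  · simpa [bval] using hrhs
  cases hy : η y
  · have hid := bern_swapC_sub_mul (u := u) hx hy
    have hνs := bern_nonneg hu (swapC x y η)
    rw [bval, if_pos rfl, one_mul, mul_assoc, le_inv_mul_iff₀ hc]
    calc c * |bern u (swapC x y η) - bern u η|
        ≤ (1 - u x) * u y * |bern u (swapC x y η) - bern u η| := by gcongr
      _ = |u x - u y| * bern u (swapC x y η) := by
        rw [← abs_of_nonneg (hc.le.trans hcu), ← abs_mul, mul_comm, hid, abs_mul,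
          abs_sub_comm, abs_of_nonneg hνs]
  · simpa [swapC_eq_self_of_eq x y (hx.trans hy.symm)] using hrhs

end Bernoulli

theorem integration_by_parts_general (um up : ℝ) (h0m : 0 < um) (hp1 : up < 1) :
    ∃ C : ℝ, 0 < C ∧
      ∀ (d N : ℕ) [NeZero N], 1 ≤ d →
      ∀ (u : Torus d N → ℝ), (∀ z, u z ∈ Set.Icc (0:ℝ) 1) →
      ∀ (x y : Torus d N), (∃ i : Fin d, y = x + uvec d N i ∨ y = x - uvec d N i) →
      u x ∈ Set.Icc um up → u y ∈ Set.Icc um up →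
      ∀ (h : Config d N → ℝ), (∀ η, h (swapC x y η) = h η) →
      ∀ (f : Config d N → ℝ), (∀ η, 0 ≤ f η) →
        (∑ η : Config d N, f η * bern u η = 1) →
        |(∑ η : Config d N, h η * (bval (η y) - bval (η x)) * f η * bern u η)
          - ∑ η : Config d N, h η * bval (η x) * (f (swapC x y η) - f η) * bern u η|
          ≤ C * |u x - u y| * ∑ η : Config d N, |h η| * f η * bern u η := by
  have hup : 0 < 1 - up := sub_pos.2 hp1
  refine ⟨(um * (1 - up))⁻¹, by positivity, ?_⟩
  intro d N _ _ u hu x y _ hux huy h hh f hf _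
  have hc : um * (1 - up) ≤ (1 - u x) * u y := by
    rw [mul_comm (1 - u x)]
    exact mul_le_mul huy.1 (by linarith [hux.2]) hup.le (by linarith [huy.1])
  rw [sum_sub_sum_eq_sum_swapC x y h f (bern u) hh,
    ← sum_comp_swapC x y (fun η => |h η| * f η * bern u η), mul_sum]
  refine (abs_sum_le_sum_abs _ _).trans (sum_le_sum fun η _ => ?_)
  calc |h η * bval (η x) * f (swapC x y η) * (bern u (swapC x y η) - bern u η)|
      = |h η| * f (swapC x y η) * (bval (η x) * |bern u (swapC x y η) - bern u η|) := by
        rw [abs_mul, abs_mul, abs_mul, abs_of_nonneg (hf _), abs_of_nonneg (bval_nonneg _)]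
        ring
    _ ≤ |h η| * f (swapC x y η) * ((um * (1 - up))⁻¹ * |u x - u y| * bern u (swapC x y η)) := by
        have hνs := bval_mul_abs_bern_swapC_sub_le hu (by positivity) hc η
        have := hf (swapC x y η)
        gcongr
    _ = _ := by
        rw [hh]
        ring

/-- Lemma 3.3 (Integration by parts): there is `C = C_{u_-,u_+} > 0` such that for every
inhomogeneous Bernoulli measure `ν = ν_{u(·)}`, every nearest-neighbour pair `x,y` with
`u_x, u_y ∈ [u_-,u_+]`, every `h` invariant under the swap `η ↦ η^{x,y}` and every probability
density `f` w.r.t. `ν`,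
`∫ h (η_y - η_x) f dν = ∫ h η_x (f(η^{x,y}) - f(η)) dν + R₁` with
`|R₁| ≤ C |u_x - u_y| ∫ |h| f dν`. -/
theorem integration_by_parts (um up : ℝ) (h0m : 0 < um) (hmp : um < up) (hp1 : up < 1) :
    ∃ C : ℝ, 0 < C ∧
      ∀ (d N : ℕ) [NeZero N], 1 ≤ d →
      ∀ (u : Torus d N → ℝ), (∀ z, u z ∈ Set.Icc (0:ℝ) 1) →
      ∀ (x y : Torus d N), (∃ i : Fin d, y = x + uvec d N i ∨ y = x - uvec d N i) →
      u x ∈ Set.Icc um up → u y ∈ Set.Icc um up →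
      ∀ (h : Config d N → ℝ), (∀ η, h (swapC x y η) = h η) →
      ∀ (f : Config d N → ℝ), (∀ η, 0 ≤ f η) →
        (∑ η : Config d N, f η * bern u η = 1) →
        |(∑ η : Config d N, h η * (bval (η y) - bval (η x)) * f η * bern u η)
          - ∑ η : Config d N, h η * bval (η x) * (f (swapC x y η) - f η) * bern u η|
          ≤ C * |u x - u y| * ∑ η : Config d N, |h η| * f η * bern u η :=
  integration_by_parts_general um up h0m hp1
end

section
/- Concentration inequality: let X₁, …, X_n be independent real random variables with X_i taking values in the interval [a_i, b_i]. Set X̄_i = X_i − E[X_i] and σ̄² = Σ_{i=1}^n (b_i − a_i)². Then for every γ ∈ [0, (σ̄²)^{-1}], log E[ exp( γ (Σ_{i=1}^n X̄_i)² ) ] ≤ 2 γ σ̄² (and in particular this logarithm is at most 2). -/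
/-!
Hoeffding's lemma makes each centred `X i` sub-Gaussian with variance proxy `((b i - a i) / 2) ^ 2`,
so by independence the centred sum `S` is sub-Gaussian with proxy `c = σ̄² / 4`. The square in
`exp (γ S²)` is linearised by the Gaussian identity `√π exp (γ s²) = ∫ exp (-x² + 2√γ s x) dx`;
after Fubini, the sub-Gaussian bound on the mgf of `S` inside the `x`-integral leaves a Gaussian
integral, so `E exp (γ S²) ≤ (1 - 2γc)^(-1/2) ≤ exp (2γc) = exp (γ σ̄² / 2)`, using `2γc ≤ 1/2`.
-/
open MeasureTheory ProbabilityTheory Real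
open scoped NNReal

lemma integral_exp_neg_sq_add_mul (s : ℝ) :
    ∫ x : ℝ, exp (-x ^ 2 + s * x) = √π * exp (s ^ 2 / 4) := by
  have h_complete_square (x : ℝ) :
      exp (-x ^ 2 + s * x) = exp (s ^ 2 / 4) * exp (-1 * (x - s / 2) ^ 2) := by
    rw [← exp_add]; ring_nf
  simp_rw [h_complete_square]
  rw [integral_const_mul, integral_sub_right_eq_self (fun x ↦ exp (-1 * x ^ 2)), integral_gaussian,
    div_one, mul_comm]

lemma integral_exp_neg_sq_add_two_sqrt_mul {γ : ℝ} (hγ : 0 ≤ γ) (s : ℝ) :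
    ∫ x : ℝ, exp (-x ^ 2 + 2 * √γ * s * x) = √π * exp (γ * s ^ 2) := by
  rw [integral_exp_neg_sq_add_mul, mul_pow, mul_pow, sq_sqrt hγ]; ring_nf

lemma inv_sqrt_one_sub_le_exp {v : ℝ} (h0 : 0 ≤ v) (h1 : v ≤ 1 / 2) : (√(1 - v))⁻¹ ≤ exp v := by
  have hpos : 0 < √(1 - v) := sqrt_pos.2 (by linarith)
  have hexp : exp v = √(exp (v + v)) := by rw [exp_add, sqrt_mul_self (exp_pos v).le]
  rw [inv_le_iff_one_le_mul₀' hpos, hexp, ← sqrt_mul' _ (exp_pos _).le, one_le_sqrt]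
  nlinarith [add_one_le_exp (v + v)]

namespace ProbabilityTheory.HasSubgaussianMGF

variable {Ω : Type*} [MeasurableSpace Ω] {μ : Measure Ω} {X : Ω → ℝ} {c : ℝ≥0} {γ : ℝ}

lemma integral_exp_neg_sq_add_mul_le (h : HasSubgaussianMGF X c μ) (hγ : 0 ≤ γ) (x : ℝ) :
    ∫ ω, exp (-x ^ 2 + 2 * √γ * X ω * x) ∂μ ≤ exp (-(1 - 2 * γ * c) * x ^ 2) :=
  calc ∫ ω, exp (-x ^ 2 + 2 * √γ * X ω * x) ∂μ
      = mgf X μ (2 * √γ * x) * exp (-x ^ 2) := by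
        rw [mgf, ← integral_mul_const]
        congr 1 with ω
        rw [← exp_add]; ring_nf
    _ ≤ exp (c * (2 * √γ * x) ^ 2 / 2) * exp (-x ^ 2) := by gcongr; exact h.mgf_le _
    _ = exp (-(1 - 2 * γ * c) * x ^ 2) := by
        rw [← exp_add, mul_pow, mul_pow, sq_sqrt hγ]; ring_nf

variable [SFinite μ]

lemma integrable_uncurry_exp_neg_sq_add_mul (h : HasSubgaussianMGF X c μ) (hγ : 0 ≤ γ)
    (hγc : 2 * γ * c < 1) :
    Integrable (Function.uncurry fun ω (x : ℝ) ↦ exp (-x ^ 2 + 2 * √γ * X ω * x))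
      (μ.prod volume) := by
  have hmeas := h.aemeasurable
  have hF : AEStronglyMeasurable (Function.uncurry fun ω (x : ℝ) ↦ exp (-x ^ 2 + 2 * √γ * X ω * x))
      (μ.prod volume) := by fun_prop
  rw [integrable_prod_iff' hF]
  refine ⟨ae_of_all _ fun x ↦ ?_, ?_⟩
  · refine ((h.integrable_exp_mul (2 * √γ * x)).mul_const (exp (-x ^ 2))).congr
      (ae_of_all _ fun ω ↦ ?_)
    simp only [Function.uncurry_apply_pair]
    rw [← exp_add]; ring_nf
  · refine (integrable_exp_neg_mul_sq (b := 1 - 2 * γ * c) (by linarith)).mono'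
      hF.norm.prod_swap.integral_prod_right' (ae_of_all _ fun x ↦ ?_)
    simp only [Function.uncurry_apply_pair, norm_of_nonneg (exp_pos _).le]
    rw [norm_of_nonneg (integral_nonneg fun _ ↦ (exp_pos _).le)]
    exact h.integral_exp_neg_sq_add_mul_le hγ x

lemma integrable_exp_mul_sq (h : HasSubgaussianMGF X c μ) (hγ : 0 ≤ γ) (hγc : 2 * γ * c < 1) :
    Integrable (fun ω ↦ exp (γ * X ω ^ 2)) μ := by
  have h_int := (h.integrable_uncurry_exp_neg_sq_add_mul hγ hγc).integral_prod_left
  simp only [Function.uncurry_apply_pair, integral_exp_neg_sq_add_two_sqrt_mul hγ] at h_int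
  exact (integrable_const_mul_iff (sqrt_pos.2 pi_pos).ne'.isUnit _).1 h_int

lemma integral_exp_mul_sq_le (h : HasSubgaussianMGF X c μ) (hγ : 0 ≤ γ) (hγc : 2 * γ * c < 1) :
    ∫ ω, exp (γ * X ω ^ 2) ∂μ ≤ (√(1 - 2 * γ * c))⁻¹ := by
  refine le_of_mul_le_mul_left ?_ (sqrt_pos.2 pi_pos)
  calc √π * ∫ ω, exp (γ * X ω ^ 2) ∂μ
      = ∫ ω, (∫ x : ℝ, exp (-x ^ 2 + 2 * √γ * X ω * x)) ∂μ := by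
        simp_rw [integral_exp_neg_sq_add_two_sqrt_mul hγ]; rw [integral_const_mul]
    _ = ∫ x : ℝ, ∫ ω, exp (-x ^ 2 + 2 * √γ * X ω * x) ∂μ :=
        integral_integral_swap (h.integrable_uncurry_exp_neg_sq_add_mul hγ hγc)
    _ ≤ ∫ x : ℝ, exp (-(1 - 2 * γ * c) * x ^ 2) :=
        integral_mono_of_nonneg (ae_of_all _ fun _ ↦ integral_nonneg fun _ ↦ (exp_pos _).le)
          (integrable_exp_neg_mul_sq (by linarith))
          (ae_of_all _ (h.integral_exp_neg_sq_add_mul_le hγ))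
    _ = √π * (√(1 - 2 * γ * c))⁻¹ := by
        rw [integral_gaussian, sqrt_div' _ (by linarith), div_eq_mul_inv]

end ProbabilityTheory.HasSubgaussianMGF

/-- Lemma 3.6 (Concentration inequality, Jara–Menezes): if `X₁, …, X_n` are independent
random variables with `X_i ∈ [a_i, b_i]`, `X̄_i = X_i - E[X_i]` and
`σ̄² = Σ_i (b_i - a_i)²`, then for every `γ ∈ [0, (σ̄²)⁻¹]`,
`log E[exp(γ (Σ_i X̄_i)²)] ≤ 2 γ σ̄²`, and in particular this logarithm is at most `2`. -/
theorem concentration_inequality {Ω : Type*} [MeasurableSpace Ω]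
    (μ : Measure Ω) [IsProbabilityMeasure μ]
    (n : ℕ) (X : Fin n → Ω → ℝ) (a b : Fin n → ℝ)
    (hmeas : ∀ i, Measurable (X i))
    (hindep : iIndepFun X μ)
    (hbound : ∀ i ω, X i ω ∈ Set.Icc (a i) (b i))
    (γ : ℝ) (hγ0 : 0 ≤ γ) (hγ : γ ≤ (∑ i, (b i - a i)^2)⁻¹) :
    Real.log (∫ ω, Real.exp (γ * (∑ i, (X i ω - ∫ ω', X i ω' ∂μ))^2) ∂μ)
      ≤ 2 * γ * ∑ i, (b i - a i)^2
    ∧ Real.log (∫ ω, Real.exp (γ * (∑ i, (X i ω - ∫ ω', X i ω' ∂μ))^2) ∂μ) ≤ 2 := by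
  set c : ℝ≥0 := ∑ i, (‖b i - a i‖₊ / 2) ^ 2
  have hS : HasSubgaussianMGF (fun ω ↦ ∑ i, (X i ω - ∫ ω', X i ω' ∂μ)) c μ :=
    HasSubgaussianMGF.sum_of_iIndepFun
      (hindep.comp (fun i x ↦ x - ∫ ω', X i ω' ∂μ) fun _ ↦ measurable_sub_const _)
      fun i _ ↦ hasSubgaussianMGF_of_mem_Icc (hmeas i).aemeasurable (ae_of_all _ (hbound i))
  have hc : (c : ℝ) = (∑ i, (b i - a i) ^ 2) / 4 := by
    simp only [c, NNReal.coe_sum, NNReal.coe_pow, NNReal.coe_div, NNReal.coe_ofNat, coe_nnnorm,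
      norm_eq_abs, sq_abs, div_pow, Finset.sum_div]
    norm_num
  have hγσ : γ * ∑ i, (b i - a i) ^ 2 ≤ 1 :=
    calc γ * ∑ i, (b i - a i) ^ 2 ≤ (∑ i, (b i - a i) ^ 2)⁻¹ * ∑ i, (b i - a i) ^ 2 := by gcongr
      _ ≤ 1 := inv_mul_le_one
  have hγc : 2 * γ * c ≤ 1 / 2 := by rw [hc]; linarith
  have hlog := (log_le_iff_le_exp (integral_exp_pos (hS.integrable_exp_mul_sq hγ0 (by linarith)))).2
    ((hS.integral_exp_mul_sq_le hγ0 (by linarith)).trans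
      (inv_sqrt_one_sub_le_exp (by positivity) hγc))
  have hσ : 0 ≤ γ * ∑ i, (b i - a i) ^ 2 := mul_nonneg hγ0 (by positivity)
  rw [hc] at hlog
  constructor <;> linarith
end

section
/- Summation-by-parts via a flow: let N, ℓ ∈ ℕ with 2ℓ − 1 < N, let n₁ ∈ ℤ^d, let Φ be any flow on the nearest-neighbor graph of Λ_{2ℓ−1} connecting δ₀ and q_ℓ = p_ℓ * p_ℓ (extended by 0 outside Λ_{2ℓ−1} and regarded inside T_N^d), and let ω̃ = (ω̃_x)_{x∈T_N^d} and ω = (ω_x)_{x∈T_N^d} be any real-valued families indexed by the torus. Then for every K, K Σ_{x∈T_N^d} ω̃_x ( ω_{x+n₁} − Σ_{y∈T_N^d} ω_{x−y+n₁} q_ℓ(−y) ) = K Σ_{j=1}^d Σ_{x∈T_N^d} h_x^{ℓ,j} ( ω_x − ω_{x+e_j} ), where h_x^{ℓ,j} = Σ_{y∈Λ_{2ℓ−1}} ω̃_{x−y−n₁} Φ(y, y+e_j). -/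
open Finset

/-- The convolution `q_ℓ = p_ℓ * p_ℓ` (supported in `Λ_{2ℓ-1}`). -/
noncomputable def qconv (d ℓ : ℕ) (x : Fin d → ℤ) : ℝ :=
  ∑ y ∈ boxZ d ℓ, punif d ℓ y * punif d ℓ (x - y)

/-- The projection `ℤ^d → T_N^d`. -/
def castT (d N : ℕ) (w : Fin d → ℤ) : Torus d N := fun j => ((w j : ℤ) : ZMod N)

/-- `q_ℓ` regarded inside `T_N^d`. -/
noncomputable def qT (d N ℓ : ℕ) [NeZero N] (z : Torus d N) : ℝ :=
  ∑ w ∈ boxZ d (2 * ℓ - 1), (if castT d N w = z then qconv d ℓ w else 0)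

/-!
Since `div Φ = δ₀ - q_ℓ`, the bracket `ω_{x+n₁} - Σ_y ω_{x-y+n₁} q_ℓ(-y)` equals
`Σ_w ω_{x+n₁+w} (div Φ)(w)`. Summation by parts on `ℤ^d` (shift the terms `Φ(w, w-e_j)` by `e_j`
and use antisymmetry; the range of summation is unchanged because `Φ` vanishes off the box)
turns this into `Σ_j Σ_w Φ(w, w+e_j) (ω_{x+n₁+w} - ω_{x+n₁+w+e_j})`. Translating `x` by `w + n₁`
on the torus then moves the weights `Φ(w, w+e_j)` onto `ω̃`.
-/

section FlowSummationByParts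

variable {α ι R : Type*} [AddCommGroup α] [CommRing R] {s : Finset α} {Φ : α → α → R}

theorem sum_mul_flow_sub_eq_neg_sum_mul_flow_add (hanti : ∀ w z, Φ w z = -Φ z w)
    (hsupp : ∀ w z, Φ w z ≠ 0 → z ∈ s) (e : α) (g : α → R) :
    ∑ w ∈ s, g w * Φ w (w - e) = -∑ w ∈ s, g (w + e) * Φ w (w + e) := by
  calc ∑ w ∈ s, g w * Φ w (w - e)
      = ∑ v ∈ s.map (Equiv.subRight e).toEmbedding, g (v + e) * Φ (v + e) v := by
        simp only [sum_map, Equiv.coe_toEmbedding, Equiv.subRight_apply, sub_add_cancel]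
    _ = ∑ v ∈ s, g (v + e) * Φ (v + e) v := by
        refine sum_congr_of_eq_on_inter ?_ ?_ fun _ _ _ => rfl
        · intro v _ hv
          rw [of_not_not (mt (hsupp (v + e) v) hv), mul_zero]
        · intro v _ hv
          have hve : v + e ∉ s := fun h => hv (mem_map.mpr ⟨v + e, h, by simp⟩)
          rw [hanti, of_not_not (mt (hsupp v (v + e)) hve), neg_zero, mul_zero]
    _ = -∑ w ∈ s, g (w + e) * Φ w (w + e) := by
        rw [← sum_neg_distrib]
        exact sum_congr rfl fun v _ => by rw [hanti, mul_neg]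

theorem sum_mul_flow_div_eq_sum_flow_mul_sub [Fintype ι] (hanti : ∀ w z, Φ w z = -Φ z w)
    (hsupp : ∀ w z, Φ w z ≠ 0 → z ∈ s) (E : ι → α) (f : α → R) :
    ∑ w ∈ s, f w * ∑ j, (Φ w (w + E j) + Φ w (w - E j))
      = ∑ j, ∑ w ∈ s, Φ w (w + E j) * (f w - f (w + E j)) := by
  simp only [mul_sum, mul_add]
  rw [sum_comm]
  refine sum_congr rfl fun j _ => ?_
  rw [sum_add_distrib, sum_mul_flow_sub_eq_neg_sum_mul_flow_add hanti hsupp, ← sub_eq_add_neg,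
    ← sum_sub_distrib]
  exact sum_congr rfl fun w _ => by ring

end FlowSummationByParts

section Torus

variable {d N : ℕ}

theorem castT_add (v w : Fin d → ℤ) : castT d N (v + w) = castT d N v + castT d N w := by
  funext k; simp [castT]

theorem castT_eZ (j : Fin d) : castT d N (eZ d j) = uvec d N j := by
  funext k; simp [castT, eZ, uvec]

theorem castT_zero : castT d N 0 = 0 := by
  funext k; simp [castT]

theorem zero_mem_boxZ {ℓ : ℕ} (hℓ : 1 ≤ ℓ) : (0 : Fin d → ℤ) ∈ boxZ d ℓ := by
  simp only [boxZ, Fintype.mem_piFinset, Pi.zero_apply, mem_Icc, le_refl, true_and]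
  intro; omega

theorem sum_mul_qT [NeZero N] (ℓ : ℕ) (F : Torus d N → ℝ) :
    ∑ y, F y * qT d N ℓ y = ∑ w ∈ boxZ d (2 * ℓ - 1), F (castT d N w) * qconv d ℓ w := by
  simp only [qT, mul_sum, mul_ite, mul_zero]
  rw [sum_comm]
  simp

theorem sub_sum_mul_qT_eq_sum_flow_mul_sub [NeZero N] {ℓ : ℕ} (hℓ : 1 ≤ ℓ)
    {Φ : (Fin d → ℤ) → (Fin d → ℤ) → ℝ} (hanti : ∀ w z, Φ w z = -Φ z w)
    (hsupp : ∀ w z, Φ w z ≠ 0 → z ∈ boxZ d (2 * ℓ - 1))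
    (hdiv : ∀ w, ∑ j, (Φ w (w + eZ d j) + Φ w (w - eZ d j))
      = (if w = 0 then 1 else 0) - qconv d ℓ w)
    (ω : Torus d N → ℝ) (x : Torus d N) :
    ω x - ∑ y, ω (x - y) * qT d N ℓ (-y)
      = ∑ j, ∑ w ∈ boxZ d (2 * ℓ - 1),
          Φ w (w + eZ d j) * (ω (x + castT d N w) - ω (x + castT d N w + uvec d N j)) := by
  have hq : ∑ y, ω (x - y) * qT d N ℓ (-y)
      = ∑ w ∈ boxZ d (2 * ℓ - 1), ω (x + castT d N w) * qconv d ℓ w := by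
    rw [← Equiv.sum_comp (Equiv.neg (Torus d N))]
    simpa only [Equiv.neg_apply, neg_neg, sub_neg_eq_add] using sum_mul_qT ℓ (ω <| x + ·)
  have hδ : ω x = ∑ w ∈ boxZ d (2 * ℓ - 1),
      ω (x + castT d N w) * (if w = 0 then 1 else 0) := by
    simp [zero_mem_boxZ (d := d) (show 1 ≤ 2 * ℓ - 1 by omega), castT_zero]
  rw [hq, hδ, ← sum_sub_distrib]
  simp_rw [← mul_sub, ← hdiv]
  rw [sum_mul_flow_div_eq_sum_flow_mul_sub hanti hsupp (eZ d) (ω <| x + castT d N ·)]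
  simp only [castT_add, castT_eZ, add_assoc]

end Torus

theorem summation_by_parts_flow_general (d N ℓ : ℕ) [NeZero N] (hℓ : 1 ≤ ℓ)
    (n₁ : Fin d → ℤ) (K : ℝ)
    (Φ : (Fin d → ℤ) → (Fin d → ℤ) → ℝ)
    (hanti : ∀ w z, Φ w z = - Φ z w)
    (hsupp : ∀ w z, Φ w z ≠ 0 →
      w ∈ boxZ d (2 * ℓ - 1) ∧ z ∈ boxZ d (2 * ℓ - 1) ∧
        ∃ j : Fin d, z = w + eZ d j ∨ z = w - eZ d j)
    (hdiv : ∀ w : Fin d → ℤ,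
      (∑ j : Fin d, (Φ w (w + eZ d j) + Φ w (w - eZ d j)))
        = (if w = 0 then 1 else 0) - qconv d ℓ w)
    (ωtilde ω : Torus d N → ℝ) :
    K * ∑ x : Torus d N,
        ωtilde x * (ω (x + castT d N n₁)
          - ∑ y : Torus d N, ω (x - y + castT d N n₁) * qT d N ℓ (-y))
      = K * ∑ j : Fin d, ∑ x : Torus d N,
          (∑ w ∈ boxZ d (2 * ℓ - 1),
            ωtilde (x - castT d N w - castT d N n₁) * Φ w (w + eZ d j))
          * (ω x - ω (x + uvec d N j)) := by
  set c := castT d N n₁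
  have hshift : ∀ x y : Torus d N, x - y + c = x + c - y := fun _ _ => by abel
  congr 1
  simp_rw [hshift, sub_sum_mul_qT_eq_sum_flow_mul_sub hℓ hanti (fun w z h => (hsupp w z h).2.1)
    hdiv, mul_sum, sum_mul]
  rw [sum_comm]
  refine sum_congr rfl fun j _ => ?_
  rw [sum_comm, sum_comm (s := univ)]
  refine sum_congr rfl fun w _ => ?_
  rw [← (Equiv.subRight (castT d N w + c)).sum_comp]
  refine sum_congr rfl fun x _ => ?_
  rw [Equiv.subRight_apply, show x - (castT d N w + c) + c + castT d N w = x by abel,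
    sub_add_eq_sub_sub, mul_assoc]

/-- Summation by parts via a flow (identity (3.3)–(3.4) in the proof of Proposition 3.1):
for any flow `Φ` on `Λ_{2ℓ-1}` connecting `δ₀` and `q_ℓ`, and any families `ω̃`, `ω` on the
torus,
`K Σ_x ω̃_x (ω_{x+n₁} - Σ_y ω_{x-y+n₁} q_ℓ(-y)) = K Σ_j Σ_x h_x^{ℓ,j} (ω_x - ω_{x+e_j})`,
where `h_x^{ℓ,j} = Σ_{y ∈ Λ_{2ℓ-1}} ω̃_{x-y-n₁} Φ(y, y+e_j)`. -/
theorem summation_by_parts_flow (d N ℓ : ℕ) [NeZero N] (hd : 1 ≤ d) (hℓ : 1 ≤ ℓ)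
    (hN : 2 * ℓ - 1 < N) (n₁ : Fin d → ℤ) (K : ℝ)
    (Φ : (Fin d → ℤ) → (Fin d → ℤ) → ℝ)
    (hanti : ∀ w z, Φ w z = - Φ z w)
    (hsupp : ∀ w z, Φ w z ≠ 0 →
      w ∈ boxZ d (2 * ℓ - 1) ∧ z ∈ boxZ d (2 * ℓ - 1) ∧
        ∃ j : Fin d, z = w + eZ d j ∨ z = w - eZ d j)
    (hdiv : ∀ w : Fin d → ℤ,
      (∑ j : Fin d, (Φ w (w + eZ d j) + Φ w (w - eZ d j)))
        = (if w = 0 then 1 else 0) - qconv d ℓ w)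
    (ωtilde ω : Torus d N → ℝ) :
    K * ∑ x : Torus d N,
        ωtilde x * (ω (x + castT d N n₁)
          - ∑ y : Torus d N, ω (x - y + castT d N n₁) * qT d N ℓ (-y))
      = K * ∑ j : Fin d, ∑ x : Torus d N,
          (∑ w ∈ boxZ d (2 * ℓ - 1),
            ωtilde (x - castT d N w - castT d N n₁) * Φ w (w + eZ d j))
          * (ω x - ω (x + uvec d N j)) :=
  summation_by_parts_flow_general d N ℓ hℓ n₁ K Φ hanti hsupp hdiv ωtilde ω
end
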